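/- Let n ≥ 5, let i₁ ≠ i₂ be two taxa in {1,…,n}, and set I = {i₁, i₂}. Let T be the tree metric with one internal edge of weight g > 0 separating I from its complement and pendant weights e_i > 0: for i ≠ j, T(i,j) = e_i + e_j + g if exactly one of i, j lies in I, and T(i,j) = e_i + e_j otherwise. Then T is the tropical mixture of two star tree metrics on n taxa if and only if e_{i₁} > g and e_{i₂} > g. -/

import Mathlib

/-- A star tree metric on `n` taxa: a dissimilarity map of the form
`D(i,j) = e i + e j` for `i ≠ j` (and `D(i,i) = 0`) with all pendant weights positive. -/
def IsStarTreeMetric {n : ℕ} (D : Fin n → Fin n → ℝ) : Prop :=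
  ∃ e : Fin n → ℝ, (∀ i, 0 < e i) ∧ (∀ i, D i i = 0) ∧
    ∀ i j, i ≠ j → D i j = e i + e j

/-- `T` is the tropical mixture (pointwise maximum) of two star tree metrics. -/
def IsMixtureOfTwoStars {n : ℕ} (T : Fin n → Fin n → ℝ) : Prop :=
  ∃ D Dbar : Fin n → Fin n → ℝ, IsStarTreeMetric D ∧ IsStarTreeMetric Dbar ∧
    ∀ i j, T i j = max (D i j) (Dbar i j)

/-- The tree metric with one internal edge of weight `g` separating `I` from its
complement, with pendant weights `e`. -/
def oneEdgeMetric {n : ℕ} (I : Finset (Fin n)) (e : Fin n → ℝ) (g : ℝ) :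
    Fin n → Fin n → ℝ :=
  fun i j => if i = j then 0
    else e i + e j + (if (i ∈ I ∧ j ∉ I) ∨ (i ∉ I ∧ j ∈ I) then g else 0)

/-!
Write `T = max(star a, star b)` and let `p ∈ I`. Among three taxa outside `I`, two have their
distance to `p` realised by the same star, say `a`. Adding these two cross distances and
subtracting the distance between the two outside taxa, which `a` does not exceed, gives
`a p ≥ e p + g`. For the other cherry taxon `q`, `a p + a q ≤ T p q = e p + e q`, so positivity
of `a q` gives `g < e q`. Conversely, if both pendant weights exceed `g`, moving weight `g` from
`i₂` to `i₁` in one star and from `i₁` to `i₂` in the other realises `T`.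
-/

open Finset

lemma isMixtureOfTwoStars_iff {n : ℕ} {T : Fin n → Fin n → ℝ} :
    IsMixtureOfTwoStars T ↔ (∀ i, T i i = 0) ∧ ∃ a b : Fin n → ℝ, (∀ i, 0 < a i) ∧
      (∀ i, 0 < b i) ∧ ∀ i j, i ≠ j → T i j = max (a i + a j) (b i + b j) := by
  constructor
  · rintro ⟨D, D', ⟨a, ha, hD0, hD⟩, ⟨b, hb, hD'0, hD'⟩, hT⟩
    refine ⟨fun i => by rw [hT, hD0, hD'0, max_self], a, b, ha, hb, fun i j hij => ?_⟩
    rw [hT, hD i j hij, hD' i j hij]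
  · rintro ⟨hT0, a, b, ha, hb, hT⟩
    refine ⟨fun i j => if i = j then 0 else a i + a j, fun i j => if i = j then 0 else b i + b j,
      ⟨a, ha, by simp, fun i j hij => by simp [hij]⟩,
      ⟨b, hb, by simp, fun i j hij => by simp [hij]⟩, fun i j => ?_⟩
    by_cases hij : i = j
    · simp [hij, hT0]
    · simp [hij, hT i j hij]

section oneEdgeMetric

variable {n : ℕ} {I : Finset (Fin n)} {e : Fin n → ℝ} {g : ℝ} {i j : Fin n}

lemma oneEdgeMetric_of_mem_of_notMem (hi : i ∈ I) (hj : j ∉ I) :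
    oneEdgeMetric I e g i j = e i + e j + g := by
  simp [oneEdgeMetric, ne_of_mem_of_not_mem hi hj, hi, hj]

lemma oneEdgeMetric_of_mem_of_mem (hij : i ≠ j) (hi : i ∈ I) (hj : j ∈ I) :
    oneEdgeMetric I e g i j = e i + e j := by
  simp [oneEdgeMetric, hij, hi, hj]

lemma oneEdgeMetric_of_notMem_of_notMem (hij : i ≠ j) (hi : i ∉ I) (hj : j ∉ I) :
    oneEdgeMetric I e g i j = e i + e j := by
  simp [oneEdgeMetric, hij, hi, hj]

end oneEdgeMetric

lemma exists_three_notMem {α : Type*} [Fintype α] [DecidableEq α] {s : Finset α}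
    (hs : #s + 2 < Fintype.card α) :
    ∃ j k l, j ∉ s ∧ k ∉ s ∧ l ∉ s ∧ j ≠ k ∧ j ≠ l ∧ k ≠ l := by
  have : 2 < #sᶜ := by rw [card_compl]; omega
  simpa only [mem_compl] using two_lt_card_iff.1 this

lemma le_or_le_of_three_max_eq {α : Type*} {a b e : α → ℝ} {g : ℝ} {p j k l : α}
    (hj : max (a p + a j) (b p + b j) = e p + e j + g)
    (hk : max (a p + a k) (b p + b k) = e p + e k + g)
    (hl : max (a p + a l) (b p + b l) = e p + e l + g)
    (hjk : max (a j + a k) (b j + b k) ≤ e j + e k)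
    (hjl : max (a j + a l) (b j + b l) ≤ e j + e l)
    (hkl : max (a k + a l) (b k + b l) ≤ e k + e l) :
    e p + g ≤ a p ∨ e p + g ≤ b p := by
  rw [max_le_iff] at hjk hjl hkl
  -- two of the three maxima are attained by the same star
  rcases max_choice (a p + a j) (b p + b j) with hj' | hj' <;>
  rcases max_choice (a p + a k) (b p + b k) with hk' | hk' <;>
  rcases max_choice (a p + a l) (b p + b l) with hl' | hl' <;>
  first | (left; linarith) | (right; linarith)

theorem lt_of_isMixtureOfTwoStars_oneEdgeMetric {n : ℕ} {I : Finset (Fin n)} {e : Fin n → ℝ}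
    {g : ℝ} {p q j k l : Fin n} (hp : p ∈ I) (hq : q ∈ I) (hpq : p ≠ q)
    (hj : j ∉ I) (hk : k ∉ I) (hl : l ∉ I) (hjk : j ≠ k) (hjl : j ≠ l) (hkl : k ≠ l)
    (hT : IsMixtureOfTwoStars (oneEdgeMetric I e g)) : g < e q := by
  obtain ⟨-, a, b, ha, hb, hT⟩ := isMixtureOfTwoStars_iff.1 hT
  have cross : ∀ u ∉ I, max (a p + a u) (b p + b u) = e p + e u + g := fun u hu => by
    rw [← hT p u (ne_of_mem_of_not_mem hp hu), oneEdgeMetric_of_mem_of_notMem hp hu]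
  have outside : ∀ u ∉ I, ∀ v ∉ I, u ≠ v → max (a u + a v) (b u + b v) ≤ e u + e v :=
    fun u hu v hv huv => by rw [← hT u v huv, oneEdgeMetric_of_notMem_of_notMem huv hu hv]
  have cherry : max (a p + a q) (b p + b q) = e p + e q := by
    rw [← hT p q hpq, oneEdgeMetric_of_mem_of_mem hpq hp hq]
  obtain hap | hbp := le_or_le_of_three_max_eq (cross j hj) (cross k hk) (cross l hl)
    (outside j hj k hk hjk) (outside j hj l hl hjl) (outside k hk l hl hkl)
  · linarith [le_max_left (a p + a q) (b p + b q), ha q]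
  · linarith [le_max_right (a p + a q) (b p + b q), hb q]

lemma max_add_sub_eq_add_abs (x y : ℝ) : max (x + y) (x - y) = x + |y| := by
  rw [sub_eq_add_neg, max_add_add_left, abs_eq_max_neg]

theorem isMixtureOfTwoStars_oneEdgeMetric_pair {n : ℕ} {i₁ i₂ : Fin n} (hne : i₁ ≠ i₂)
    {e : Fin n → ℝ} (he : ∀ i, 0 < e i) {g : ℝ} (hg : 0 < g) (h₁ : g < e i₁) (h₂ : g < e i₂) :
    IsMixtureOfTwoStars (oneEdgeMetric {i₁, i₂} e g) := by
  set s : Fin n → ℝ := fun i => if i = i₁ then 1 else if i = i₂ then -1 else 0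
  have hmetric : ∀ i j, i ≠ j → oneEdgeMetric {i₁, i₂} e g i j = e i + e j + g * |s i + s j| := by
    intro i j hij
    by_cases hi₁ : i = i₁ <;> by_cases hi₂ : i = i₂ <;> by_cases hj₁ : j = i₁ <;>
      by_cases hj₂ : j = i₂ <;> subst_vars <;> simp_all [oneEdgeMetric, s]
  have bound : ∀ i, |g * s i| < e i := by
    intro i
    by_cases hi₁ : i = i₁ <;> by_cases hi₂ : i = i₂ <;>
      simp [s, hi₁, hi₂, hne.symm, abs_of_pos hg] <;> linarith [he i]
  refine isMixtureOfTwoStars_iff.2 ⟨fun i => by simp [oneEdgeMetric],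
    fun i => e i + g * s i, fun i => e i - g * s i,
    fun i => by linarith [bound i, neg_abs_le (g * s i)],
    fun i => by linarith [bound i, le_abs_self (g * s i)], fun i j hij => ?_⟩
  rw [show e i + g * s i + (e j + g * s j) = e i + e j + g * (s i + s j) by ring,
    show e i - g * s i + (e j - g * s j) = e i + e j - g * (s i + s j) by ring,
    max_add_sub_eq_add_abs, abs_mul, abs_of_pos hg, hmetric i j hij]

/-- for `n ≥ 5` and a cherry `I = {i₁, i₂}`, the one-internal-edge
tree metric with weight `g > 0` and pendant weights `e_i > 0` is a tropical
mixture of two star tree metrics iff `e_{i₁} > g` and `e_{i₂} > g`. -/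
theorem cherry_one_edge_is_mixture_iff
    (n : ℕ) (hn : 5 ≤ n) (i₁ i₂ : Fin n) (hne : i₁ ≠ i₂)
    (e : Fin n → ℝ) (he : ∀ i, 0 < e i) (g : ℝ) (hg : 0 < g) :
    IsMixtureOfTwoStars (oneEdgeMetric {i₁, i₂} e g) ↔
      (g < e i₁ ∧ g < e i₂) := by
  have hcard : #({i₁, i₂} : Finset (Fin n)) + 2 < Fintype.card (Fin n) := by
    have := card_le_two (a := i₁) (b := i₂)
    rw [Fintype.card_fin]; omega
  obtain ⟨j, k, l, hj, hk, hl, hjk, hjl, hkl⟩ := exists_three_notMem hcard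
  have mem₁ : i₁ ∈ ({i₁, i₂} : Finset (Fin n)) := mem_insert_self _ _
  have mem₂ : i₂ ∈ ({i₁, i₂} : Finset (Fin n)) := mem_insert_of_mem (mem_singleton_self _)
  constructor
  · intro hT
    exact ⟨lt_of_isMixtureOfTwoStars_oneEdgeMetric mem₂ mem₁ hne.symm hj hk hl hjk hjl hkl hT,
      lt_of_isMixtureOfTwoStars_oneEdgeMetric mem₁ mem₂ hne hj hk hl hjk hjl hkl hT⟩
  · rintro ⟨h₁, h₂⟩
    exact isMixtureOfTwoStars_oneEdgeMetric_pair hne he hg h₁ h₂
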